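/- arXiv:2404.08551 — 2 statements merged into one kernel-verified Lean document; each statement's English description precedes it below -/
import Mathlib

section
/- Let A and B be Boolean algebras, L : B → A a Boolean algebra homomorphism, and R : A → B a monotone function such that L is left adjoint to R (i.e., for all a ∈ A and b ∈ B, L(b) ≤ a iff b ≤ R(a)). Then for all a ∈ A and b ∈ B, R(a ∨ L(b)) ≤ R(a) ∨ b. -/
/-- If `L : B → A` is a Boolean homomorphism with a right adjoint `R : A → B` (a monotone map),
then `R (a ⊔ L b) ≤ R a ⊔ b`. -/
theorem rightAdjoint_sup_le {A B : Type*} [BooleanAlgebra A] [BooleanAlgebra B]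
    (L : B → A) (R : A → B)
    (hLsup : ∀ x y : B, L (x ⊔ y) = L x ⊔ L y)
    (hLinf : ∀ x y : B, L (x ⊓ y) = L x ⊓ L y)
    (hLcompl : ∀ x : B, L xᶜ = (L x)ᶜ)
    (hLtop : L ⊤ = ⊤) (hLbot : L ⊥ = ⊥)
    (hR : Monotone R)
    (adj : ∀ (a : A) (b : B), L b ≤ a ↔ b ≤ R a) :
    ∀ (a : A) (b : B), R (a ⊔ L b) ≤ R a ⊔ b := by
  intro a b
  have counit : L (R (a ⊔ L b)) ≤ a ⊔ L b := (adj _ _).mpr le_rfl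
  have key : R (a ⊔ L b) ⊓ bᶜ ≤ R a := by
    rw [← adj, hLinf, hLcompl]
    calc L (R (a ⊔ L b)) ⊓ (L b)ᶜ ≤ (a ⊔ L b) ⊓ (L b)ᶜ :=
          inf_le_inf_right _ counit
      _ ≤ a := by
          rw [inf_sup_right]
          simp [inf_le_left]
  calc R (a ⊔ L b) = R (a ⊔ L b) ⊓ (b ⊔ bᶜ) := by simp
    _ = (R (a ⊔ L b) ⊓ b) ⊔ (R (a ⊔ L b) ⊓ bᶜ) := inf_sup_left _ _ _
    _ ≤ R a ⊔ b := sup_le (le_sup_of_le_right inf_le_right)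
          (le_sup_of_le_left key)
end

section
/- Consider the first-order language with one n-ary relation symbol R_n for each n ∈ ℕ, the theory T consisting of all sentences ∀x₁…∀x_n (R_n(x₁,…,x_n) ↔ ∃x_{n+1} R_{n+1}(x₁,…,x_{n+1})). A model of T is equivalent to a pair (A, W) where A is a set and W is a set of finite words over A that is closed under prefixes and such that every word in W is a proper prefix of some word in W. Prefix Lemma: for variables x₁,…,x_k and finite families of atomic formulas R_{m_i}(x_{f_i(1)},…,x_{f_i(m_i)}) (i = 1,…,ī) and R_{n_j}(x_{g_j(1)},…,x_{g_j(n_j)}) (j = 1,…,j̄), the entailment T ⊨ (⋀_i R_{m_i}(x_{f_i(1)},…,x_{f_i(m_i)})) → (⋁_j R_{n_j}(x_{g_j(1)},…,x_{g_j(n_j)})) holds if and only if there exist i₀ and j₀ such that the tuple (x_{g_{j₀}(1)},…,x_{g_{j₀}(n_{j₀})}) is a prefix of the tuple (x_{f_{i₀}(1)},…,x_{f_{i₀}(m_{i₀})}). -/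
/-!
If some conclusion tuple is a prefix of some premise tuple, prefix-closure of `W` gives the
entailment. Conversely, take the variables themselves as letters, together with a fresh letter
`c`, and let `W` consist of the prefixes of the words `Fᵢ cᵖ`, where `Fᵢ` is the `i`-th premise
tuple. This is a model satisfying every premise under the identity assignment, and a word
without `c` lies in `W` only if it is a prefix of some `Fᵢ`.
-/

/-- A model of the theory `T` (of the language with one `n`-ary relation `R_n` for each `n`,
axiomatized by `R_n(x₁,…,xₙ) ↔ ∃x_{n+1} R_{n+1}(x₁,…,x_{n+1})`), presented semantically:
a set `W` of finite words over `A` closed under prefixes and such that every word of `W`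
is a proper prefix of some word of `W`. -/
def IsWordsModel {A : Type} (W : Set (List A)) : Prop :=
  (∀ w ∈ W, ∀ v : List A, v <+: w → v ∈ W) ∧
  (∀ w ∈ W, ∃ w' ∈ W, w <+: w' ∧ w ≠ w')

theorem List.IsPrefix.of_append_replicate {α : Type*} {l₁ l₂ : List α} {c : α} {p : ℕ}
    (hc : c ∉ l₁) (h : l₁ <+: l₂ ++ List.replicate p c) : l₁ <+: l₂ := by
  rcases List.prefix_or_prefix_of_prefix h (List.prefix_append l₂ _) with h' | ⟨t, rfl⟩
  · exact h'
  · have ht : t <+: List.replicate p c := (List.prefix_append_right_inj l₂).mp h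
    rcases t with _ | ⟨a, t'⟩
    · simp
    · have hac : a = c := List.eq_of_mem_replicate (ht.subset List.mem_cons_self)
      exact absurd (List.mem_append_right l₂ (hac ▸ List.mem_cons_self)) hc

def paddedPrefixes {ι α : Type*} (F : ι → List α) (c : α) : Set (List α) :=
  {w | ∃ i p, w <+: F i ++ List.replicate p c}

theorem isWordsModel_paddedPrefixes {ι A : Type} (F : ι → List A) (c : A) :
    IsWordsModel (paddedPrefixes F c) := by
  constructor
  · rintro w ⟨i, p, hw⟩ v hv
    exact ⟨i, p, hv.trans hw⟩
  · rintro w ⟨i, p, hw⟩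
    refine ⟨F i ++ List.replicate (p + 1) c, ⟨i, p + 1, List.prefix_refl _⟩, ?_, ?_⟩
    · refine hw.trans ?_
      rw [List.replicate_succ', ← List.append_assoc]
      exact List.prefix_append _ _
    · rintro rfl
      simpa using hw.length_le

/-- Prefix Lemma: the entailment
`T ⊨ ⋀ᵢ R_{mᵢ}(x_{fᵢ(1)},…,x_{fᵢ(mᵢ)}) → ⋁ⱼ R_{nⱼ}(x_{gⱼ(1)},…,x_{gⱼ(nⱼ)})`
holds if and only if some tuple of variables `(x_{g_{j₀}(1)},…,x_{g_{j₀}(n_{j₀})})` is a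
prefix of some tuple `(x_{f_{i₀}(1)},…,x_{f_{i₀}(m_{i₀})})`. -/
theorem prefix_lemma (k ibar jbar : ℕ) (m : Fin ibar → ℕ) (n : Fin jbar → ℕ)
    (f : ∀ i : Fin ibar, Fin (m i) → Fin k)
    (g : ∀ j : Fin jbar, Fin (n j) → Fin k) :
    (∀ (A : Type) (W : Set (List A)), IsWordsModel W →
      ∀ ρ : Fin k → A,
        (∀ i : Fin ibar, (List.ofFn fun t => ρ (f i t)) ∈ W) →
        ∃ j : Fin jbar, (List.ofFn fun t => ρ (g j t)) ∈ W) ↔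
    ∃ (i : Fin ibar) (j : Fin jbar),
      (List.ofFn fun t => g j t) <+: (List.ofFn fun t => f i t) := by
  constructor
  · intro hent
    obtain ⟨j, i, p, hji⟩ := hent (Option (Fin k))
      (paddedPrefixes (fun i => List.ofFn fun t => some (f i t)) none)
      (isWordsModel_paddedPrefixes _ _) some (fun i => ⟨i, 0, by simp⟩)
    refine ⟨i, j, ?_⟩
    rw [← List.prefix_map_iff_of_injective (Option.some_injective _)]
    simpa only [List.map_ofFn, Function.comp_def] using
      hji.of_append_replicate (by simp)
  · rintro ⟨i, j, hji⟩ A W hW ρ hprem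
    refine ⟨j, hW.1 _ (hprem i) _ ?_⟩
    simpa only [List.map_ofFn, Function.comp_def] using hji.map ρ
end
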